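/- arXiv:1307.3747 — 2 statements merged into one kernel-verified Lean document; each statement's English description precedes it below -/
import Mathlib

section
/- Let Φ be a Drinfeld module of rank r over K, let v ∈ Ω_K be an infinite place, let β ∈ K be a nontorsion point, and suppose Bosser's lower bound holds: there exist constants C_2, C_3 (depending on Φ, β, v) such that log|Φ_P(β)|_v ≥ C_2 + C_3·deg(P)·log deg(P) for all nonzero P ∈ F_q[t]. Assume also that |Φ_t(y)|_v = |t|_v·|y|_v for |y|_v sufficiently small, with log|t|_v > 0. Then there exist constants C_0, C_1 such that for every torsion point γ killed by a monic Q ∈ F_q[t] of degree d, log|γ − β|_v ≥ C_0 + C_1·d·log d. -/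
structure DrinfeldModuleData (Fq K : Type*) [Field Fq] [Fintype Fq] [Field K] where
  toFun : Polynomial Fq → Polynomial K
  alg : Polynomial Fq →+* K
  map_one' : toFun 1 = Polynomial.X
  map_add' : ∀ a b, toFun (a + b) = toFun a + toFun b
  map_mul' : ∀ a b, toFun (a * b) = (toFun a).comp (toFun b)
  coeff_zero' : ∀ a, (toFun a).coeff 0 = 0
  coeff_one' : ∀ a, (toFun a).coeff 1 = alg a
  degree_pos' : ∀ a, a ≠ 0 → 0 < (toFun a).natDegree
  supp_q_pow' : ∀ a i, (toFun a).coeff i ≠ 0 → ∃ k : ℕ, i = Fintype.card Fq ^ k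
  alg_injective' : Function.Injective alg

/-!
Put `z = β - γ`. Since `Φ_Q` is additive and kills `γ`, `Φ_Q(z) = Φ_Q(β) ≠ 0`. Writing
`Q = ∑ a_j t^j`, we have `Φ_Q(z) = ∑ Φ_{a_j}(Φ_t^j(z))`, and while `|t|_v^d |z|_v` is small each
`Φ_t^j` multiplies `|z|_v` by `|t|_v^j`, so `|Φ_Q(z)|_v ≤ M |t|_v^d |z|_v`. Either `|z|_v` is
already `≥ ε |t|_v^{-d}`, or Bosser's bound on `|Φ_Q(β)|_v` gives
`log |z|_v ≥ C₂ + C₃ d log d - log M - d log |t|_v`; both are of the form `C₀ + C₁ d log d`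
because `d ≤ d log d + 1`.
-/

open Polynomial

theorem Polynomial.abv_eval_le_sum_abv_coeff_mul {K : Type*} [Field K] (v : AbsoluteValue K ℝ)
    {P : K[X]} (hP : P.coeff 0 = 0) {w : K} (hw : v w ≤ 1) :
    v (P.eval w) ≤ (∑ i ∈ Finset.range (P.natDegree + 1), v (P.coeff i)) * v w := by
  rw [eval_eq_sum_range, Finset.sum_mul]
  refine (v.sum_le _ _).trans (Finset.sum_le_sum fun i _ => ?_)
  rcases Nat.eq_zero_or_pos i with rfl | hi
  · simp [hP]
  · rw [v.map_mul, v.map_pow]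
    gcongr
    exact pow_le_of_le_one (v.nonneg w) hw hi.ne'

theorem apply_iterate_eq_pow_mul_of_lt {α : Type*} (v : α → ℝ) (f : α → α) {T ε : ℝ} (hT : 1 ≤ T)
    (hf : ∀ y, v y < ε → v (f y) = T * v y) {z : α} (hz : 0 ≤ v z) {m : ℕ}
    (hzm : T ^ m * v z < ε) {j : ℕ} (hj : j ≤ m) : v (f^[j] z) = T ^ j * v z := by
  induction j with
  | zero => simp
  | succ j ih =>
    have hvj := ih (by omega)
    have hlt : v (f^[j] z) < ε := by
      rw [hvj]
      exact lt_of_le_of_lt (by gcongr; omega) hzm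
    rw [Function.iterate_succ_apply', hf _ hlt, hvj, pow_succ]
    ring

theorem Real.natCast_le_mul_log_add_one (m : ℕ) : (m : ℝ) ≤ m * Real.log m + 1 := by
  rcases Nat.eq_zero_or_pos m with rfl | hm
  · simp
  · have hm' : (0 : ℝ) < m := by exact_mod_cast hm
    have := Real.one_sub_inv_le_log_of_pos hm'
    have : (m : ℝ) * (1 - (m : ℝ)⁻¹) = m - 1 := by field_simp
    nlinarith

theorem exists_add_mul_mul_log_le (A B C L : ℝ) (hL : 0 ≤ L) :
    ∃ C₀ C₁ : ℝ, ∀ m : ℕ,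
      C₀ + C₁ * m * Real.log m ≤ min A (B + C * m * Real.log m) - m * L := by
  refine ⟨min A B - L, min C 0 - L, fun m => ?_⟩
  have hs : 0 ≤ (m : ℝ) * Real.log m := mul_nonneg m.cast_nonneg (Real.log_natCast_nonneg m)
  have hmL : m * L ≤ (m * Real.log m + 1) * L :=
    mul_le_mul_of_nonneg_right (Real.natCast_le_mul_log_add_one m) hL
  have hC0 : min C 0 * (m * Real.log m) ≤ 0 := mul_nonpos_of_nonpos_of_nonneg (min_le_right _ _) hs
  have hCC : min C 0 * (m * Real.log m) ≤ C * (m * Real.log m) := by gcongr; exact min_le_left _ _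
  rw [le_sub_iff_add_le, le_min_iff]
  constructor <;> nlinarith [min_le_left A B, min_le_right A B]

theorem Real.min_log_le_log_add_log_of_lt_imp {x y P e M : ℝ} (hx : 0 < x) (hy : 0 < y)
    (hP : 0 < P) (he : 0 < e) (hM : 0 < M) (h : P * x < e → y ≤ M * (P * x)) :
    min (Real.log e) (Real.log y - Real.log M) ≤ Real.log x + Real.log P := by
  rw [add_comm, ← Real.log_mul hP.ne' hx.ne']
  by_cases hsmall : P * x < e
  · refine min_le_of_right_le ?_
    rw [sub_le_iff_le_add', ← Real.log_mul hM.ne' (by positivity)]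
    exact Real.log_le_log hy (h hsmall)
  · exact min_le_of_left_le (Real.log_le_log he (not_lt.mp hsmall))

namespace DrinfeldModuleData

variable {Fq K : Type*} [Field Fq] [Fintype Fq] [Field K] (Φ : DrinfeldModuleData Fq K)

theorem toFun_sum {ι : Type*} (s : Finset ι) (f : ι → Fq[X]) :
    Φ.toFun (∑ i ∈ s, f i) = ∑ i ∈ s, Φ.toFun (f i) :=
  map_sum (AddMonoidHom.mk' Φ.toFun Φ.map_add') f s

theorem eval_zero (a : Fq[X]) : (Φ.toFun a).eval 0 = 0 := by
  rw [← coeff_zero_eq_eval_zero, Φ.coeff_zero']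

/-- Only `q`-power monomials occur in `Φ_a`, and these are additive in characteristic `p`. -/
theorem eval_add (a : Fq[X]) (x y : K) :
    (Φ.toFun a).eval (x + y) = (Φ.toFun a).eval x + (Φ.toFun a).eval y := by
  have : Fact (ringChar Fq).Prime := ⟨CharP.char_is_prime Fq _⟩
  have : CharP K (ringChar Fq) :=
    charP_of_injective_ringHom (f := Φ.alg.comp C) (Φ.alg_injective'.comp C_injective) _
  obtain ⟨n, -, hcard⟩ := FiniteField.card Fq (ringChar Fq)
  simp only [eval_eq_sum_range, ← Finset.sum_add_distrib]
  refine Finset.sum_congr rfl fun i _ => ?_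
  by_cases hc : (Φ.toFun a).coeff i = 0
  · simp [hc]
  · obtain ⟨k, rfl⟩ := Φ.supp_q_pow' a _ hc
    rw [hcard, ← pow_mul, add_pow_char_pow, mul_add]

theorem eval_sub (a : Fq[X]) (x y : K) :
    (Φ.toFun a).eval (x - y) = (Φ.toFun a).eval x - (Φ.toFun a).eval y :=
  eq_sub_of_add_eq (by rw [← Φ.eval_add, sub_add_cancel])

theorem eval_X_pow (j : ℕ) (w : K) :
    (Φ.toFun (X ^ j)).eval w = (fun y => (Φ.toFun X).eval y)^[j] w := by
  induction j generalizing w with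
  | zero => simp [Φ.map_one']
  | succ j ih => rw [pow_succ, Φ.map_mul', eval_comp, ih, Function.iterate_succ_apply]

theorem eval_eq_sum_support (Q : Fq[X]) (z : K) :
    (Φ.toFun Q).eval z =
      ∑ j ∈ Q.support, (Φ.toFun (C (Q.coeff j))).eval ((fun y => (Φ.toFun X).eval y)^[j] z) := by
  conv_lhs => rw [Q.as_sum_support, toFun_sum, eval_finsetSum]
  refine Finset.sum_congr rfl fun j _ => ?_
  rw [← C_mul_X_pow_eq_monomial, Φ.map_mul', eval_comp, eval_X_pow]

theorem exists_abv_eval_C_le (v : AbsoluteValue K ℝ) :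
    ∃ M : ℝ, 0 < M ∧ ∀ (a : Fq) (w : K), v w ≤ 1 → v ((Φ.toFun (C a)).eval w) ≤ M * v w := by
  let bound : Fq → ℝ := fun a =>
    ∑ i ∈ Finset.range ((Φ.toFun (C a)).natDegree + 1), v ((Φ.toFun (C a)).coeff i)
  have hbound : ∀ a, 0 ≤ bound a := fun a => Finset.sum_nonneg fun i _ => v.nonneg _
  refine ⟨1 + ∑ a, bound a, by positivity, fun a w hw => ?_⟩
  refine (abv_eval_le_sum_abv_coeff_mul v (Φ.coeff_zero' _) hw).trans ?_
  gcongr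
  calc bound a ≤ ∑ a, bound a := Finset.single_le_sum (fun a _ => hbound a) (Finset.mem_univ a)
    _ ≤ 1 + ∑ a, bound a := le_add_of_nonneg_left zero_le_one

theorem exists_abv_eval_le_of_small (v : AbsoluteValue K ℝ) (hna : IsNonarchimedean v)
    {T ε : ℝ} (hT : 1 ≤ T) (hsmall : ∀ y, v y < ε → v ((Φ.toFun X).eval y) = T * v y) :
    ∃ M : ℝ, 0 < M ∧ ∀ (Q : Fq[X]) (z : K), T ^ Q.natDegree * v z < min ε 1 →
      v ((Φ.toFun Q).eval z) ≤ M * (T ^ Q.natDegree * v z) := by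
  obtain ⟨M, hM, hC⟩ := Φ.exists_abv_eval_C_le v
  refine ⟨M, hM, fun Q z hz => ?_⟩
  rw [Φ.eval_eq_sum_support]
  refine hna.apply_sum_le.trans (Real.iSup_le (fun ⟨j, hj⟩ => ?_) (by positivity))
  have hjm : j ≤ Q.natDegree := le_natDegree_of_mem_supp j hj
  have hiter := apply_iterate_eq_pow_mul_of_lt v _ hT hsmall (v.nonneg z)
    (hz.trans_le (min_le_left _ _)) hjm
  calc _ ≤ M * v ((fun y => (Φ.toFun X).eval y)^[j] z) := by
        refine hC _ _ ?_
        rw [hiter]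
        exact (lt_of_le_of_lt (by gcongr) hz).le.trans (min_le_right _ _)
    _ ≤ M * (T ^ Q.natDegree * v z) := by rw [hiter]; gcongr

end DrinfeldModuleData

/-- Let `Φ` be a Drinfeld module, `v` an infinite place, `β` nontorsion, and
suppose Bosser's bound `log|Φ_P(β)|_v ≥ C₂ + C₃·deg(P)·log deg(P)` holds for all nonzero
`P ∈ F_q[t]`. Assume `|Φ_t(y)|_v = |t|_v·|y|_v` for `|y|_v` sufficiently small and
`log|t|_v > 0`. Then there exist constants `C₀, C₁` such that for every torsion point `γ`
killed by a monic `Q` of degree `d`, `log|γ − β|_v ≥ C₀ + C₁·d·log d`. -/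
theorem stmt_17 (Fq K : Type*) [Field Fq] [Fintype Fq] [Field K]
    (Φ : DrinfeldModuleData Fq K)
    (v : AbsoluteValue K ℝ)
    (hna : ∀ x y : K, v (x + y) ≤ max (v x) (v y))
    (β : K) (hβ : ∀ Q : Polynomial Fq, Q ≠ 0 → (Φ.toFun Q).eval β ≠ 0)
    (C₂ C₃ : ℝ)
    (hBosser : ∀ P : Polynomial Fq, P ≠ 0 →
      C₂ + C₃ * (P.natDegree : ℝ) * Real.log (P.natDegree : ℝ) ≤
        Real.log (v ((Φ.toFun P).eval β)))
    (hT : 1 < v (Φ.alg Polynomial.X))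
    (ε : ℝ) (hε : 0 < ε)
    (hsmall : ∀ y : K, v y < ε →
      v ((Φ.toFun Polynomial.X).eval y) = v (Φ.alg Polynomial.X) * v y) :
    ∃ C₀ C₁ : ℝ, ∀ (γ : K) (Q : Polynomial Fq), Q.Monic → (Φ.toFun Q).eval γ = 0 →
      C₀ + C₁ * (Q.natDegree : ℝ) * Real.log (Q.natDegree : ℝ) ≤
        Real.log (v (γ - β)) := by
  set T := v (Φ.alg X)
  obtain ⟨M, hM, hbound⟩ := Φ.exists_abv_eval_le_of_small v hna hT.le hsmall
  obtain ⟨C₀, C₁, hC⟩ := exists_add_mul_mul_log_le (Real.log (min ε 1)) (C₂ - Real.log M) C₃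
    (Real.log T) (Real.log_nonneg hT.le)
  refine ⟨C₀, C₁, fun γ Q hQ hγ => ?_⟩
  set m := Q.natDegree
  have hΦ : (Φ.toFun Q).eval (β - γ) = (Φ.toFun Q).eval β := by rw [Φ.eval_sub, hγ, sub_zero]
  have hΦ0 : (Φ.toFun Q).eval (β - γ) ≠ 0 := hΦ ▸ hβ Q hQ.ne_zero
  have hz : β - γ ≠ 0 := fun h => hΦ0 (by rw [h, Φ.eval_zero])
  have key := Real.min_log_le_log_add_log_of_lt_imp (v.pos hz) (v.pos hΦ0)
    (pow_pos (zero_lt_one.trans hT) m) (lt_min hε one_pos) hM (hbound Q (β - γ))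
  rw [Real.log_pow, hΦ] at key
  rw [← v.map_neg, neg_sub]
  calc C₀ + C₁ * m * Real.log m
      ≤ min (Real.log (min ε 1)) (C₂ - Real.log M + C₃ * m * Real.log m) - m * Real.log T := hC m
    _ ≤ min (Real.log (min ε 1)) (Real.log (v ((Φ.toFun Q).eval β)) - Real.log M)
          - m * Real.log T := by
        gcongr
        linarith [hBosser Q hQ.ne_zero]
    _ ≤ Real.log (v (β - γ)) := by linarith
end

section
/- Let K be a finite extension of F_q(t) with the product formula, and let Φ be a Drinfeld module over K in normal form with good reduction at all finite places. Let S be a finite set of places of K containing all infinite places, and let β ∈ K be nontorsion. Suppose that for every place v ∈ Ω_K and every infinite sequence (γ_n) of distinct torsion points, lim_n (1/[K(γ_n):K]) Σ_σ log|β − γ_n^σ|_v = ĥ_{Φ,v}(β), and that every torsion point which is S-integral with respect to β satisfies log|β − γ^σ|_v = log^+|β|_v for all v ∉ S and all σ. Then there are at most finitely many torsion points of Φ that are S-integral with respect to β. -/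
/-- `γ ∈ K̄ = L` is a torsion point of `Φ`. -/
def IsTorsionPt (Fq K L : Type*) [Field Fq] [Fintype Fq] [Field K] [Field L] [Algebra K L]
    (Φ : DrinfeldModuleData Fq K) (γ : L) : Prop :=
  ∃ Q : Polynomial Fq, Q ≠ 0 ∧ ((Φ.toFun Q).map (algebraMap K L)).eval γ = 0

/-- The Galois-averaged local contribution
`(1/[K(γ):K]) Σ_σ log|β − γ^σ|_v`, the conjugates `γ^σ` being the roots of the
minimal polynomial of `γ` over `K`. -/
noncomputable def conjAvgLog (K L : Type*) [Field K] [Field L] [Algebra K L]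
    (v : AbsoluteValue L ℝ) (β : K) (γ : L) : ℝ :=
  (1 / ((minpoly K γ).natDegree : ℝ)) *
    (((minpoly K γ).map (algebraMap K L)).roots.map
        (fun y => Real.log (v (algebraMap K L β - y)))).sum

/-- `γ` is `S`-integral with respect to `β`: for every place `ω ∉ S` and every conjugate
`γ^σ`: if `|β|_ω ≤ 1` then `|β − γ^σ|_ω ≥ 1`, and if `|β|_ω > 1` then `|γ^σ|_ω ≤ 1`. -/
def SIntegral (K L : Type*) [Field K] [Field L] [Algebra K L]
    {Ω : Type*} (w : Ω → AbsoluteValue L ℝ) (S : Finset Ω) (β : K) (γ : L) : Prop :=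
  ∀ ω : Ω, ω ∉ S → ∀ y ∈ ((minpoly K γ).map (algebraMap K L)).roots,
    ((w ω) (algebraMap K L β) ≤ 1 → 1 ≤ (w ω) (algebraMap K L β - y)) ∧
      (1 < (w ω) (algebraMap K L β) → (w ω) y ≤ 1)

open Filter Topology Polynomial

theorem tendsto_finsum_of_eq_off_finset {ι Ω M : Type*} [AddCommMonoid M] [TopologicalSpace M]
    [ContinuousAdd M] {l : Filter ι} {f : ι → Ω → M} {g : Ω → M} (S : Finset Ω)
    (hg : g.support.Finite) (hout : ∀ i, ∀ ω ∉ S, f i ω = g ω)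
    (hlim : ∀ ω, Tendsto (fun i => f i ω) l (𝓝 (g ω))) :
    Tendsto (fun i => ∑ᶠ ω, f i ω) l (𝓝 (∑ᶠ ω, g ω)) := by
  classical
  set T := S ∪ hg.toFinset
  have hsupp_f : ∀ i, (f i).support ⊆ T := fun i ω hω => by
    by_cases hωS : ω ∈ S
    · exact Finset.mem_union_left _ hωS
    · rw [Function.mem_support, hout i ω hωS] at hω
      exact Finset.mem_union_right _ (hg.mem_toFinset.mpr hω)
  have hsupp_g : g.support ⊆ T := fun ω hω =>
    Finset.mem_union_right _ (hg.mem_toFinset.mpr hω)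
  simp only [finsum_eq_sum_of_support_subset _ (hsupp_f _),
    finsum_eq_sum_of_support_subset _ hsupp_g]
  exact tendsto_finsetSum T fun ω _ => hlim ω

namespace DrinfeldModuleData

variable {Fq K : Type*} [Field Fq] [Fintype Fq] [Field K] (Φ : DrinfeldModuleData Fq K)

theorem toFun_ne_zero {a : Fq[X]} (ha : a ≠ 0) : Φ.toFun a ≠ 0 := fun h => by
  simpa [h] using Φ.degree_pos' a ha

end DrinfeldModuleData

namespace IsTorsionPt

variable {Fq K L : Type*} [Field Fq] [Fintype Fq] [Field K] [Field L] [Algebra K L]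
  {Φ : DrinfeldModuleData Fq K} {γ : L}

theorem isIntegral (hγ : IsTorsionPt Fq K L Φ γ) : IsIntegral K γ := by
  obtain ⟨Q, hQ, hev⟩ := hγ
  exact IsAlgebraic.isIntegral
    ⟨Φ.toFun Q, Φ.toFun_ne_zero hQ, by rwa [aeval_def, ← eval_map]⟩

theorem ne_algebraMap (hγ : IsTorsionPt Fq K L Φ γ) {β : K}
    (hβ : ∀ Q : Fq[X], Q ≠ 0 → (Φ.toFun Q).eval β ≠ 0) : γ ≠ algebraMap K L β := by
  rintro rfl
  obtain ⟨Q, hQ, hev⟩ := hγ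
  rw [eval_map, eval₂_at_apply, map_eq_zero] at hev
  exact hβ Q hQ hev

end IsTorsionPt

theorem conjAvgLog_eq_of_forall_roots {K L : Type*} [Field K] [Field L] [Algebra K L]
    [IsAlgClosed L] {v : AbsoluteValue L ℝ} {β : K} {γ : L} {c : ℝ} (hγ : IsIntegral K γ)
    (hroots : ∀ y ∈ ((minpoly K γ).map (algebraMap K L)).roots,
      Real.log (v (algebraMap K L β - y)) = c) :
    conjAvgLog K L v β γ = c := by
  have hdeg : ((minpoly K γ).natDegree : ℝ) ≠ 0 := by
    exact_mod_cast (minpoly.natDegree_pos hγ).ne'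
  rw [conjAvgLog, Multiset.map_congr rfl hroots, Multiset.map_const', Multiset.sum_replicate,
    IsAlgClosed.card_roots_map_eq_natDegree_from_simpleRing, nsmul_eq_mul]
  field_simp

theorem stmt_19_general (Fq K L : Type*) [Field Fq] [Fintype Fq] [Field K] [Field L]
    [Algebra K L] [IsAlgClosed L]
    (Φ : DrinfeldModuleData Fq K)
    (Ω : Type*) (w : Ω → AbsoluteValue L ℝ)
    (S : Finset Ω)
    (β : K) (hβ : ∀ Q : Polynomial Fq, Q ≠ 0 → (Φ.toFun Q).eval β ≠ 0)
    (hhat : Ω → ℝ) (hhat_fin : (Function.support hhat).Finite)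
    (hhat_pos : 0 < ∑ᶠ ω, hhat ω)
    (hhat_out : ∀ ω : Ω, ω ∉ S →
      hhat ω = Real.log (max ((w ω) (algebraMap K L β)) 1))
    (hprod : ∀ γ : L, algebraMap K L β ≠ γ →
      (Function.support fun ω => conjAvgLog K L (w ω) β γ).Finite ∧
        ∑ᶠ ω, conjAvgLog K L (w ω) β γ = 0)
    (hequi : ∀ (ω : Ω) (γs : ℕ → L), (∀ n, IsTorsionPt Fq K L Φ (γs n)) →
      Function.Injective γs →
      Filter.Tendsto (fun n => conjAvgLog K L (w ω) β (γs n)) Filter.atTop (nhds (hhat ω)))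
    (hSint : ∀ γ : L, IsTorsionPt Fq K L Φ γ → SIntegral K L w S β γ →
      ∀ ω : Ω, ω ∉ S → ∀ y ∈ ((minpoly K γ).map (algebraMap K L)).roots,
        Real.log ((w ω) (algebraMap K L β - y)) =
          Real.log (max ((w ω) (algebraMap K L β)) 1)) :
    {γ : L | IsTorsionPt Fq K L Φ γ ∧ SIntegral K L w S β γ}.Finite := by
  by_contra hfin
  have hinf := Set.not_finite.mp hfin
  set γs : ℕ → L := fun n => hinf.natEmbedding _ n
  have hγs_inj : Function.Injective γs :=
    Subtype.val_injective.comp (hinf.natEmbedding _).injective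
  have hmem (n : ℕ) : IsTorsionPt Fq K L Φ (γs n) ∧ SIntegral K L w S β (γs n) :=
    (hinf.natEmbedding _ n).2
  have hout (n : ℕ) (ω : Ω) (hω : ω ∉ S) : conjAvgLog K L (w ω) β (γs n) = hhat ω := by
    rw [hhat_out ω hω]
    exact conjAvgLog_eq_of_forall_roots (hmem n).1.isIntegral
      (hSint _ (hmem n).1 (hmem n).2 ω hω)
  have hlim := tendsto_finsum_of_eq_off_finset S hhat_fin hout
    fun ω => hequi ω γs (fun n => (hmem n).1) hγs_inj
  have hzero (n : ℕ) : ∑ᶠ ω, conjAvgLog K L (w ω) β (γs n) = 0 :=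
    (hprod _ ((hmem n).1.ne_algebraMap hβ).symm).2
  simp only [hzero] at hlim
  exact hhat_pos.ne (tendsto_nhds_unique tendsto_const_nhds hlim)

/-- Ih's conjecture for Drinfeld modules, conditional form. `K` is a function
field with the product formula (stated here for the Galois-averaged conjugate sums), `Φ` a
Drinfeld module in normal form with good reduction at all finite places (those outside
`Sinf ⊆ S`), `β ∈ K` nontorsion (so its canonical height `ĥ_Φ(β) = Σ_ω ĥ_{Φ,ω}(β) > 0`).
Assuming the equidistribution limit `lim_n conjAvgLog = ĥ_{Φ,ω}(β)` for every place `ω`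
and every sequence of distinct torsion points, and that `S`-integral torsion points
satisfy `log|β − γ^σ|_ω = log⁺|β|_ω` for `ω ∉ S` (which also equals `ĥ_{Φ,ω}(β)` there),
there are at most finitely many torsion points of `Φ` that are `S`-integral w.r.t. `β`. -/
theorem stmt_19 (Fq K L : Type*) [Field Fq] [Fintype Fq] [Field K] [Field L]
    [Algebra K L] [IsAlgClosed L]
    (Φ : DrinfeldModuleData Fq K)
    (Ω : Type*) (w : Ω → AbsoluteValue L ℝ)
    (S Sinf : Finset Ω) (hSinf : Sinf ⊆ S)
    (hgood : ∀ ω : Ω, ω ∉ Sinf → ∀ (a : Polynomial Fq) (i : ℕ),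
      (w ω) (algebraMap K L ((Φ.toFun a).coeff i)) ≤ 1)
    (β : K) (hβ : ∀ Q : Polynomial Fq, Q ≠ 0 → (Φ.toFun Q).eval β ≠ 0)
    (hhat : Ω → ℝ) (hhat_fin : (Function.support hhat).Finite)
    (hhat_pos : 0 < ∑ᶠ ω, hhat ω)
    (hhat_out : ∀ ω : Ω, ω ∉ S →
      hhat ω = Real.log (max ((w ω) (algebraMap K L β)) 1))
    (hprod : ∀ γ : L, algebraMap K L β ≠ γ →
      (Function.support fun ω => conjAvgLog K L (w ω) β γ).Finite ∧
        ∑ᶠ ω, conjAvgLog K L (w ω) β γ = 0)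
    (hequi : ∀ (ω : Ω) (γs : ℕ → L), (∀ n, IsTorsionPt Fq K L Φ (γs n)) →
      Function.Injective γs →
      Filter.Tendsto (fun n => conjAvgLog K L (w ω) β (γs n)) Filter.atTop (nhds (hhat ω)))
    (hSint : ∀ γ : L, IsTorsionPt Fq K L Φ γ → SIntegral K L w S β γ →
      ∀ ω : Ω, ω ∉ S → ∀ y ∈ ((minpoly K γ).map (algebraMap K L)).roots,
        Real.log ((w ω) (algebraMap K L β - y)) =
          Real.log (max ((w ω) (algebraMap K L β)) 1)) :
    {γ : L | IsTorsionPt Fq K L Φ γ ∧ SIntegral K L w S β γ}.Finite :=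
  stmt_19_general Fq K L Φ Ω w S β hβ hhat hhat_fin hhat_pos hhat_out hprod hequi hSint
end
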